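/- For G_N in the class 𝒢_{β,γ} with β+2γ<1, the maximum over all connected components of G_N of the graph diameter of the component is O_P(log N), i.e. there is a constant C such that with probability tending to 1 every component has diameter at most C log N. -/

import Mathlib

open scoped BigOperators Classical
open MeasureTheory Filter

noncomputable section

namespace VoterIRG

/-! ### Inhomogeneous random graphs -/

/-- Chung–Lu connection probabilities `p_{ij} = min(β N^{2γ-1} i^{-γ} j^{-γ}, 1)`,
where the vertex `i : Fin N` carries the label `i+1 ∈ {1, …, N}`. -/
def pCL (β γ : ℝ) (N : ℕ) (i j : Fin N) : ℝ :=
  min (β * (N : ℝ) ^ (2 * γ - 1) * ((i : ℕ) + 1 : ℝ) ^ (-γ) * ((j : ℕ) + 1 : ℝ) ^ (-γ)) 1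

/-- Index set of potential edges on `Fin N`. -/
abbrev EdgeIdx (N : ℕ) := {p : Fin N × Fin N // p.1 < p.2}

/-- An edge configuration: which potential edges are present. -/
abbrev EdgeConf (N : ℕ) := EdgeIdx N → Bool

/-- The simple graph determined by an edge configuration. -/
def graphOf {N : ℕ} (ω : EdgeConf N) : SimpleGraph (Fin N) where
  Adj i j := (∃ h : i < j, ω ⟨(i, j), h⟩ = true) ∨ ∃ h : j < i, ω ⟨(j, i), h⟩ = true
  symm := ⟨fun i j h => h.symm⟩
  loopless := ⟨fun i h => by
    rcases h with ⟨h, _⟩ | ⟨h, _⟩ <;> exact absurd h (lt_irrefl i)⟩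

/-- The degree of the vertex `i`. -/
def deg {N : ℕ} (ω : EdgeConf N) (i : Fin N) : ℕ :=
  ∑ j, if (graphOf ω).Adj i j then 1 else 0

/-- A member of the class `𝒢_{β,γ}` of subcritical inhomogeneous random graph models:
for each `N`, edges are present independently, with probabilities `q` lying in
`(0, 1/2)` that approximate the Chung–Lu probabilities `p` in the sense that
`∑_{i≠j} (p_{ij} - q_{ij})² / p_{ij} → 0`. -/
structure IRGModel (β γ : ℝ) where
  q : (N : ℕ) → Fin N → Fin N → ℝ
  q_symm : ∀ N (i j : Fin N), q N i j = q N j i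
  q_mem : ∀ N (i j : Fin N), q N i j ∈ Set.Ioo (0 : ℝ) (1 / 2)
  law : (N : ℕ) → Measure (EdgeConf N)
  law_prob : ∀ N, IsProbabilityMeasure (law N)
  law_indep : ∀ N (σ : EdgeConf N),
    law N {σ} = ∏ e : EdgeIdx N,
      (if σ e then ENNReal.ofReal (q N e.val.1 e.val.2)
       else ENNReal.ofReal (1 - q N e.val.1 e.val.2))
  q_approx : Tendsto
    (fun N => ∑ i : Fin N, ∑ j : Fin N,
      if i ≠ j then (pCL β γ N i j - q N i j) ^ 2 / pCL β γ N i j else 0)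
    atTop (nhds 0)

/-- `K_γ = N^{(1-2γ)/(2-2γ)} log N`. -/
def Kgamma (γ : ℝ) (N : ℕ) : ℝ :=
  (N : ℝ) ^ ((1 - 2 * γ) / (2 - 2 * γ)) * Real.log N

/-- The vertex `k` (with label `k+1`) indexes a big component, i.e. `k + 1 ≤ K_γ`. -/
def BigIdx (γ : ℝ) {N : ℕ} (k : Fin N) : Prop :=
  ((k : ℕ) + 1 : ℝ) ≤ Kgamma γ N

/-- The vertex `i` lies in a big component. -/
def InBigComp (γ : ℝ) {N : ℕ} (ω : EdgeConf N) (i : Fin N) : Prop :=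
  ∃ k : Fin N, BigIdx γ k ∧ (graphOf ω).Reachable k i

/-- Total degree of the component of `k`. -/
def compDegSum {N : ℕ} (ω : EdgeConf N) (k : Fin N) : ℝ :=
  ∑ z, if (graphOf ω).Reachable k z then (deg ω z : ℝ) else 0

/-- Empirical `η`-th degree moment of the component of `k`. -/
def compMoment {N : ℕ} (ω : EdgeConf N) (k : Fin N) (η : ℝ) : ℝ :=
  ∑ z, if (graphOf ω).Reachable k z then (deg ω z : ℝ) ^ η else 0

/-- The component of `k` is a tree. -/
def TreeComp {N : ℕ} (ω : EdgeConf N) (k : Fin N) : Prop :=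
  ((graphOf ω).induce {v | (graphOf ω).Reachable k v}).IsTree

/-- `w` belongs to the branch of `v` (connectedness avoiding the root `r`). -/
def InBranch {N : ℕ} (ω : EdgeConf N) (r v w : Fin N) : Prop :=
  Relation.ReflTransGen (fun a b => (graphOf ω).Adj a b ∧ a ≠ r ∧ b ≠ r) v w

/-- The number of vertices of the branch of `v` (avoiding the root `r`). -/
def branchSize {N : ℕ} (ω : EdgeConf N) (r v : Fin N) : ℝ :=
  ∑ w, if InBranch ω r v w then (1 : ℝ) else 0

/-- Total degree of the branch of `v` (avoiding the root `r`). -/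
def branchDegSum {N : ℕ} (ω : EdgeConf N) (r v : Fin N) : ℝ :=
  ∑ w, if InBranch ω r v w then (deg ω w : ℝ) else 0

/-- The number of neighbours of `k` having degree 1. -/
def leafCount {N : ℕ} (ω : EdgeConf N) (k : Fin N) : ℕ :=
  ∑ j, if (graphOf ω).Adj k j ∧ deg ω j = 1 then 1 else 0

end VoterIRG

/-!
A pair of vertices at distance at least `L` is joined by a self-avoiding path with `L` edges,
and the edges of a fixed such path are present independently. A union bound over vertex tuples
therefore bounds the probability by the path sum `∑ ∏ q = 𝟙ᵀ Qᴸ 𝟙 ≤ N ‖Q‖ᴸ`, where `Q` may be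
replaced by any entrywise larger matrix. Off the diagonal `q ≤ c w wᵀ + (q - p)` with
`c = β N^{2γ-1}` and `w i = i^{-γ}`: the rank-one part has norm `c ‖w‖² ≤ β / (1 - 2γ) + o(1)`,
and the error has Frobenius norm at most the square root of `∑ (p - q)² / p → 0`. Since
`β / (1 - 2γ) < 1` the norm is eventually below some `r < 1`, and `L = ⌈C log N⌉` with
`C = -2 / log r` makes `N rᴸ ≤ 1 / N`.
-/

open Matrix WithLp

theorem measure_forall_mem_eq_true {ι : Type*} [Fintype ι] [DecidableEq ι]
    {μ : Measure (ι → Bool)} {p : ι → ℝ} (hp0 : ∀ e, 0 ≤ p e) (hp1 : ∀ e, p e ≤ 1)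
    (hμ : ∀ σ, μ {σ} = ∏ e, if σ e then ENNReal.ofReal (p e) else ENNReal.ofReal (1 - p e))
    (E : Finset ι) :
    μ {ω | ∀ e ∈ E, ω e = true} = ∏ e ∈ E, ENNReal.ofReal (p e) := by
  let t : ι → Finset Bool := fun e => if e ∈ E then {true} else Finset.univ
  have hset : {ω : ι → Bool | ∀ e ∈ E, ω e = true} = ↑(Fintype.piFinset t) := by
    ext ω
    simp only [Set.mem_ofPred_eq, Fintype.coe_piFinset, Set.mem_pi, Set.mem_univ,
      forall_const, t]
    refine forall_congr' fun e => ?_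
    split_ifs with he <;> simp [he]
  rw [hset, ← sum_measure_singleton]
  simp_rw [hμ]
  rw [← Finset.prod_univ_sum t fun e b => if b then ENNReal.ofReal (p e) else
    ENNReal.ofReal (1 - p e)]
  refine Eq.trans (Finset.prod_congr rfl fun e _ => ?_) (Fintype.prod_ite_mem E _)
  by_cases he : e ∈ E
  · simp [t, he]
  · simp [t, he, ← ENNReal.ofReal_add (hp0 e) (sub_nonneg.2 (hp1 e))]

theorem tendsto_measure_of_measure_compl_le {κ : Type*} {l : Filter κ} {Ω : κ → Type*}
    [∀ n, MeasurableSpace (Ω n)] {μ : ∀ n, Measure (Ω n)} (hμ : ∀ n, IsProbabilityMeasure (μ n))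
    {s : ∀ n, Set (Ω n)} (hs : ∀ n, MeasurableSet (s n)) {a : κ → ENNReal}
    (ha : Tendsto a l (nhds 0)) (h : ∀ᶠ n in l, μ n (s n)ᶜ ≤ a n) :
    Tendsto (fun n => μ n (s n)) l (nhds 1) := by
  have hcompl : Tendsto (fun n => μ n (s n)ᶜ) l (nhds 0) :=
    tendsto_of_tendsto_of_tendsto_of_le_of_le' tendsto_const_nhds ha
      (Eventually.of_forall fun _ => zero_le) h
  have := ENNReal.Tendsto.sub tendsto_const_nhds hcompl (Or.inl ENNReal.one_ne_top)
  rw [tsub_zero] at this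
  refine this.congr fun n => ?_
  rw [prob_compl_eq_one_sub (hs n), ENNReal.sub_sub_cancel ENNReal.one_ne_top prob_le_one]

theorem Function.Injective.sym2_castSucc_succ {α : Type*} {L : ℕ} {v : Fin (L + 1) → α}
    (hv : Function.Injective v) :
    Function.Injective fun k : Fin L => s(v k.castSucc, v k.succ) := by
  intro k m hkm
  rcases Sym2.eq_iff.1 hkm with ⟨h1, -⟩ | ⟨h1, h2⟩
  · exact Fin.castSucc_injective _ (hv h1)
  · have h1 := congrArg Fin.val (hv h1)
    have h2 := congrArg Fin.val (hv h2)
    simp only [Fin.val_castSucc, Fin.val_succ] at h1 h2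
    omega

theorem SimpleGraph.Reachable.exists_injective_adj_of_le_dist {V : Type*} {G : SimpleGraph V}
    {i j : V} (h : G.Reachable i j) {L : ℕ} (hL : L ≤ G.dist i j) :
    ∃ v : Fin (L + 1) → V, Function.Injective v ∧
      ∀ k : Fin L, G.Adj (v k.castSucc) (v k.succ) := by
  obtain ⟨p, hp, hlen⟩ := h.exists_path_of_dist
  refine ⟨fun k => p.getVert k, fun k m hkm => Fin.ext ?_, fun k => ?_⟩
  · exact hp.getVert_injOn (by simp; omega) (by simp; omega) hkm
  · simpa using p.adj_getVert_succ (i := k) (by omega)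

section PathSums

variable {ι : Type*} [Fintype ι]

theorem sum_mul_prod_eq_dotProduct_pow_mulVec [DecidableEq ι] {R : Type*} [CommSemiring R]
    (P : Matrix ι ι R) (φ : ι → R) (t : ℕ) :
    ∑ v : Fin (t + 1) → ι, φ (v 0) * ∏ k : Fin t, P (v k.castSucc) (v k.succ) =
      φ ⬝ᵥ (P ^ t *ᵥ 1) := by
  induction t generalizing φ with
  | zero =>
    rw [← (Equiv.funUnique (Fin 1) ι).symm.sum_comp]
    simp [dotProduct]
  | succ t ih =>
    rw [← (Fin.consEquiv fun _ => ι).sum_comp, Fintype.sum_prod_type]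
    simp only [Fin.consEquiv_apply, Fin.cons_zero, Fin.prod_univ_succ, Fin.castSucc_zero,
      Fin.cons_succ, ← Fin.succ_castSucc, ← mul_assoc]
    rw [Finset.sum_comm]
    simp only [← Finset.sum_mul]
    rw [pow_succ', ← mulVec_mulVec, dotProduct_mulVec, ← ih]
    rfl

theorem norm_toLp_eq_sqrt_sum_sq (f : ι → ℝ) : ‖toLp 2 f‖ = √(∑ i, f i ^ 2) := by
  simp [EuclideanSpace.norm_eq]

theorem norm_toLp_mulVec_le (D : Matrix ι ι ℝ) (f : ι → ℝ) :
    ‖toLp 2 (D *ᵥ f)‖ ≤ √(∑ x, ∑ y, D x y ^ 2) * ‖toLp 2 f‖ := by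
  rw [norm_toLp_eq_sqrt_sum_sq, norm_toLp_eq_sqrt_sum_sq, ← Real.sqrt_mul (by positivity),
    Finset.sum_mul]
  gcongr with x
  exact Finset.sum_mul_sq_le_sq_mul_sq _ _ _

theorem norm_toLp_smul_vecMulVec_mulVec_le (c : ℝ) (w f : ι → ℝ) :
    ‖toLp 2 ((c • vecMulVec w w) *ᵥ f)‖ ≤ |c| * ‖toLp 2 w‖ ^ 2 * ‖toLp 2 f‖ := by
  have hCS : |w ⬝ᵥ f| ≤ ‖toLp 2 w‖ * ‖toLp 2 f‖ := by
    simpa [EuclideanSpace.inner_toLp_toLp, dotProduct_comm] using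
      abs_real_inner_le_norm (toLp 2 w) (toLp 2 f)
  rw [smul_mulVec, vecMulVec_mulVec, op_smul_eq_smul, smul_smul, toLp_smul, norm_smul,
    Real.norm_eq_abs, abs_mul]
  calc |c| * |w ⬝ᵥ f| * ‖toLp 2 w‖ ≤ |c| * (‖toLp 2 w‖ * ‖toLp 2 f‖) * ‖toLp 2 w‖ := by
        gcongr
    _ = |c| * ‖toLp 2 w‖ ^ 2 * ‖toLp 2 f‖ := by ring

theorem norm_toLp_pow_mulVec_le [DecidableEq ι] {P : Matrix ι ι ℝ} {K : ℝ} (hK : 0 ≤ K)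
    (hP : ∀ f, ‖toLp 2 (P *ᵥ f)‖ ≤ K * ‖toLp 2 f‖) (t : ℕ) (f : ι → ℝ) :
    ‖toLp 2 (P ^ t *ᵥ f)‖ ≤ K ^ t * ‖toLp 2 f‖ := by
  induction t with
  | zero => simp
  | succ t ih =>
    rw [pow_succ', ← mulVec_mulVec, pow_succ', mul_assoc]
    exact (hP _).trans (by gcongr)

theorem sum_prod_le_card_mul_pow {Q D : Matrix ι ι ℝ} {c : ℝ} {w : ι → ℝ}
    (hQ0 : ∀ x y, 0 ≤ Q x y) (hQ : ∀ x y, Q x y ≤ c * w x * w y + D x y) (t : ℕ) :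
    ∑ v : Fin (t + 1) → ι, ∏ k : Fin t, Q (v k.castSucc) (v k.succ) ≤
      Fintype.card ι * (|c| * ∑ x, w x ^ 2 + √(∑ x, ∑ y, D x y ^ 2)) ^ t := by
  classical
  set K := |c| * ∑ x, w x ^ 2 + √(∑ x, ∑ y, D x y ^ 2)
  set P : Matrix ι ι ℝ := c • vecMulVec w w + D
  have hQP : ∀ x y, Q x y ≤ P x y := by simpa [P, vecMulVec, mul_assoc] using hQ
  have hw : ‖toLp 2 w‖ ^ 2 = ∑ x, w x ^ 2 := by
    rw [norm_toLp_eq_sqrt_sum_sq, Real.sq_sqrt (by positivity)]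
  have hP : ∀ f, ‖toLp 2 (P *ᵥ f)‖ ≤ K * ‖toLp 2 f‖ := fun f => by
    rw [add_mulVec, toLp_add, add_mul, ← hw]
    exact (norm_add_le _ _).trans (add_le_add (norm_toLp_smul_vecMulVec_mulVec_le c w f)
      (norm_toLp_mulVec_le D f))
  have hone : ‖toLp 2 (1 : ι → ℝ)‖ ^ 2 = Fintype.card ι := by
    simp [norm_toLp_eq_sqrt_sum_sq]
  calc ∑ v : Fin (t + 1) → ι, ∏ k : Fin t, Q (v k.castSucc) (v k.succ)
      ≤ ∑ v : Fin (t + 1) → ι, ∏ k : Fin t, P (v k.castSucc) (v k.succ) := by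
        gcongr with v _ k
        exacts [fun _ _ => hQ0 _ _, hQP _ _]
    _ = inner ℝ (toLp 2 1) (toLp 2 (P ^ t *ᵥ 1)) := by
        simpa [EuclideanSpace.inner_toLp_toLp, dotProduct_comm] using
          sum_mul_prod_eq_dotProduct_pow_mulVec P 1 t
    _ ≤ ‖toLp 2 (1 : ι → ℝ)‖ * (K ^ t * ‖toLp 2 (1 : ι → ℝ)‖) :=
        (real_inner_le_norm _ _).trans
          (by gcongr; exact norm_toLp_pow_mulVec_le (by positivity) hP t 1)
    _ = Fintype.card ι * K ^ t := by rw [← hone]; ring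

end PathSums

theorem sum_rpow_sub_one_le {s : ℝ} (hs0 : 0 < s) (hs1 : s ≤ 1) (N : ℕ) :
    ∑ i : Fin N, ((i : ℕ) + 1 : ℝ) ^ (s - 1) ≤ 1 + (N : ℝ) ^ s / s := by
  rw [Fin.sum_univ_eq_sum_range (fun i => ((i : ℝ) + 1) ^ (s - 1))]
  rcases N with _ | n
  · simp [Real.zero_rpow hs0.ne']
  have hanti : AntitoneOn (fun x : ℝ => x ^ (s - 1)) (Set.Icc 1 (1 + n)) :=
    fun x hx y _ hxy => Real.rpow_le_rpow_of_nonpos (by linarith [hx.1]) hxy (by linarith)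
  have hint := hanti.sum_le_integral
  rw [integral_rpow (Or.inl (by linarith)), sub_add_cancel, Real.one_rpow] at hint
  rw [Finset.sum_range_succ', add_comm]
  push_cast at hint ⊢
  rw [zero_add, Real.one_rpow]
  calc 1 + ∑ i ∈ Finset.range n, ((i : ℝ) + 1 + 1) ^ (s - 1)
      ≤ 1 + ((1 + n) ^ s - 1) / s := by
        gcongr 1 + ?_
        refine Eq.trans_le (Finset.sum_congr rfl fun i _ => ?_) hint
        ring_nf
    _ ≤ 1 + ((n : ℝ) + 1) ^ s / s := by
        rw [add_comm (1 : ℝ) n]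
        gcongr
        linarith

theorem natCast_mul_pow_ceil_le_inv {r : ℝ} (hr0 : 0 < r) (hr1 : r < 1) (N : ℕ) :
    (N : ℝ) * r ^ ⌈-2 / Real.log r * Real.log N⌉₊ ≤ (N : ℝ)⁻¹ := by
  rcases N.eq_zero_or_pos with rfl | hN
  · simp
  have hN' : (0 : ℝ) < N := by exact_mod_cast hN
  have hlog : Real.log r ≠ 0 := (Real.log_neg hr0 hr1).ne
  have hpow : r ^ (-2 / Real.log r * Real.log N) = ((N : ℝ) ^ 2)⁻¹ := by
    rw [Real.rpow_def_of_pos hr0, show Real.log r * (-2 / Real.log r * Real.log N) =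
      -(2 * Real.log N) by field_simp, Real.exp_neg, two_mul, Real.exp_add, Real.exp_log hN', sq]
  calc (N : ℝ) * r ^ ⌈-2 / Real.log r * Real.log N⌉₊
      ≤ N * r ^ (-2 / Real.log r * Real.log N) := by
        rw [← Real.rpow_natCast]
        exact mul_le_mul_of_nonneg_left
          (Real.rpow_le_rpow_of_exponent_ge hr0 hr1.le (Nat.le_ceil _)) hN'.le
    _ = (N : ℝ)⁻¹ := by rw [hpow]; field_simp

namespace VoterIRG

namespace EdgeIdx

def ofNe {N : ℕ} {a b : Fin N} (h : a ≠ b) : EdgeIdx N :=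
  if hlt : a < b then ⟨(a, b), hlt⟩ else ⟨(b, a), h.lt_or_gt.resolve_left hlt⟩

theorem sym2_ofNe {N : ℕ} {a b : Fin N} (h : a ≠ b) :
    s((ofNe h).1.1, (ofNe h).1.2) = s(a, b) := by
  unfold ofNe
  split_ifs
  · rfl
  · exact Sym2.eq_swap

theorem apply_ofNe_of_adj {N : ℕ} {ω : EdgeConf N} {a b : Fin N}
    (hadj : (graphOf ω).Adj a b) : ω (ofNe hadj.ne) = true := by
  unfold ofNe
  rcases hadj with ⟨hlt, hω⟩ | ⟨hlt, hω⟩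
  · rwa [dif_pos hlt]
  · rwa [dif_neg (asymm hlt)]

end EdgeIdx

theorem pCL_pos {β : ℝ} (hβ : 0 < β) (γ : ℝ) {N : ℕ} (i j : Fin N) : 0 < pCL β γ N i j := by
  have hN : (0 : ℝ) < N := by exact_mod_cast i.pos
  exact lt_min (by positivity) one_pos

theorem mul_sum_rpow_sq_le {β γ : ℝ} (hβ : 0 ≤ β) (hγ : 0 ≤ γ) (hγ1 : 2 * γ < 1) {N : ℕ}
    (hN : 0 < N) :
    β * (N : ℝ) ^ (2 * γ - 1) * ∑ i : Fin N, (((i : ℕ) + 1 : ℝ) ^ (-γ)) ^ 2 ≤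
      β * (N : ℝ) ^ (2 * γ - 1) + β / (1 - 2 * γ) := by
  have hN' : (0 : ℝ) < N := by exact_mod_cast hN
  have hsq (i : Fin N) :
      (((i : ℕ) + 1 : ℝ) ^ (-γ)) ^ 2 = ((i : ℕ) + 1 : ℝ) ^ ((1 - 2 * γ) - 1) := by
    rw [← Real.rpow_natCast, ← Real.rpow_mul (by positivity)]
    ring_nf
  have hsum := sum_rpow_sub_one_le (s := 1 - 2 * γ) (by linarith) (by linarith) N
  calc β * (N : ℝ) ^ (2 * γ - 1) * ∑ i : Fin N, (((i : ℕ) + 1 : ℝ) ^ (-γ)) ^ 2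
      ≤ β * (N : ℝ) ^ (2 * γ - 1) * (1 + (N : ℝ) ^ (1 - 2 * γ) / (1 - 2 * γ)) := by
        simp only [hsq]
        gcongr
    _ = β * (N : ℝ) ^ (2 * γ - 1) + β / (1 - 2 * γ) := by
        rw [mul_add, mul_one, ← mul_div_assoc, mul_assoc, ← Real.rpow_add hN']
        simp

namespace IRGModel

variable {β γ : ℝ} (M : IRGModel β γ)

/-- The diagonal is zeroed: `q N i i` is meaningless for a simple graph and is not controlled by
`q_approx`. -/
def qOff (N : ℕ) : Matrix (Fin N) (Fin N) ℝ := fun a b => if a = b then 0 else M.q N a b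

def approxError (N : ℕ) : ℝ :=
  ∑ i : Fin N, ∑ j : Fin N,
    if i ≠ j then (pCL β γ N i j - M.q N i j) ^ 2 / pCL β γ N i j else 0

/-- Bounds the `ℓ²` operator norm of `qOff N`: rank-one Chung–Lu part plus Frobenius error. -/
def normBound (N : ℕ) : ℝ :=
  β / (1 - 2 * γ) + β * (N : ℝ) ^ (2 * γ - 1) + √(M.approxError N)

theorem qOff_nonneg (N : ℕ) (a b : Fin N) : 0 ≤ M.qOff N a b := by
  unfold qOff
  split_ifs
  exacts [le_rfl, (M.q_mem N a b).1.le]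

theorem q_ofNe {N : ℕ} {a b : Fin N} (h : a ≠ b) :
    M.q N (EdgeIdx.ofNe h).1.1 (EdgeIdx.ofNe h).1.2 = M.q N a b := by
  unfold EdgeIdx.ofNe
  split_ifs
  · rfl
  · exact M.q_symm N b a

theorem law_forall_adj_le {N L : ℕ} {v : Fin (L + 1) → Fin N} (hv : Function.Injective v) :
    M.law N {ω | ∀ k : Fin L, (graphOf ω).Adj (v k.castSucc) (v k.succ)} ≤
      ENNReal.ofReal (∏ k : Fin L, M.qOff N (v k.castSucc) (v k.succ)) := by
  have hne (k : Fin L) : v k.castSucc ≠ v k.succ := hv.ne (Fin.castSucc_lt_succ (i := k)).ne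
  let e (k : Fin L) : EdgeIdx N := EdgeIdx.ofNe (hne k)
  have he : Function.Injective e := fun k m hkm => hv.sym2_castSucc_succ <| by
    simpa only [e, EdgeIdx.sym2_ofNe] using congrArg (fun e : EdgeIdx N => s(e.1.1, e.1.2)) hkm
  have hq (e : EdgeIdx N) := M.q_mem N e.1.1 e.1.2
  calc M.law N {ω | ∀ k : Fin L, (graphOf ω).Adj (v k.castSucc) (v k.succ)}
      ≤ M.law N {ω | ∀ e' ∈ Finset.univ.image e, ω e' = true} := by
        refine measure_mono fun ω hω => ?_
        simpa using fun k => EdgeIdx.apply_ofNe_of_adj (hω k)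
    _ = ∏ e' ∈ Finset.univ.image e, ENNReal.ofReal (M.q N e'.1.1 e'.1.2) :=
        measure_forall_mem_eq_true (fun e => (hq e).1.le) (fun e => by linarith [(hq e).2])
          (M.law_indep N) _
    _ = ENNReal.ofReal (∏ k : Fin L, M.qOff N (v k.castSucc) (v k.succ)) := by
        rw [Finset.prod_image he.injOn,
          ENNReal.ofReal_prod_of_nonneg fun k _ => M.qOff_nonneg N _ _]
        simp [e, M.q_ofNe, qOff, hne]

theorem law_exists_le_dist_le (N L : ℕ) :
    M.law N {ω | ∃ i j, (graphOf ω).Reachable i j ∧ L ≤ (graphOf ω).dist i j} ≤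
      ENNReal.ofReal
        (∑ v : Fin (L + 1) → Fin N, ∏ k : Fin L, M.qOff N (v k.castSucc) (v k.succ)) := by
  have hsub : {ω | ∃ i j, (graphOf ω).Reachable i j ∧ L ≤ (graphOf ω).dist i j} ⊆
      ⋃ v ∈ Finset.univ.filter (Function.Injective (α := Fin (L + 1)) (β := Fin N)),
        {ω | ∀ k : Fin L, (graphOf ω).Adj (v k.castSucc) (v k.succ)} := by
    rintro ω ⟨i, j, hij, hL⟩
    obtain ⟨v, hv, hadj⟩ := hij.exists_injective_adj_of_le_dist hL
    exact Set.mem_biUnion (by simpa using hv) hadj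
  rw [ENNReal.ofReal_sum_of_nonneg fun v _ => Finset.prod_nonneg fun k _ => M.qOff_nonneg N _ _]
  calc _ ≤ _ := measure_mono hsub
    _ ≤ _ := measure_biUnion_finset_le _ _
    _ ≤ _ := Finset.sum_le_sum fun v hv => M.law_forall_adj_le (Finset.mem_filter.1 hv).2
    _ ≤ _ := Finset.sum_le_sum_of_subset (Finset.filter_subset _ _)

theorem sum_sq_le_approxError (hβ : 0 < β) (N : ℕ) :
    ∑ x : Fin N, ∑ y : Fin N, (if x = y then 0 else M.q N x y - pCL β γ N x y) ^ 2 ≤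
      M.approxError N := by
  refine Finset.sum_le_sum fun x _ => Finset.sum_le_sum fun y _ => ?_
  by_cases h : x = y
  · simp [h]
  · rw [if_neg h, if_pos h, sub_sq_comm, le_div_iff₀ (pCL_pos hβ γ x y)]
    exact mul_le_of_le_one_right (sq_nonneg _) (min_le_right _ _)

theorem sum_prod_qOff_le (hβ : 0 < β) (hγ : 0 ≤ γ) (hγ1 : 2 * γ < 1) {N : ℕ} (hN : 0 < N)
    {r : ℝ} (hr : M.normBound N ≤ r) (L : ℕ) :
    ∑ v : Fin (L + 1) → Fin N, ∏ k : Fin L, M.qOff N (v k.castSucc) (v k.succ) ≤ N * r ^ L := by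
  set c := β * (N : ℝ) ^ (2 * γ - 1) with hc_def
  have hc : 0 ≤ c := by positivity
  have hQ (x y : Fin N) :
      M.qOff N x y ≤ c * ((x : ℕ) + 1 : ℝ) ^ (-γ) * ((y : ℕ) + 1 : ℝ) ^ (-γ) +
        (if x = y then 0 else M.q N x y - pCL β γ N x y) := by
    unfold qOff
    split_ifs
    · simp only [add_zero]
      positivity
    · have hp : pCL β γ N x y ≤ c * ((x : ℕ) + 1 : ℝ) ^ (-γ) * ((y : ℕ) + 1 : ℝ) ^ (-γ) :=
        min_le_left _ _
      linarith
  refine (sum_prod_le_card_mul_pow (M.qOff_nonneg N) hQ L).trans ?_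
  rw [Fintype.card_fin, abs_of_nonneg hc]
  gcongr
  refine le_trans ?_ hr
  rw [normBound, ← hc_def]
  gcongr
  · linarith [mul_sum_rpow_sq_le hβ.le hγ hγ1 hN]
  · exact M.sum_sq_le_approxError hβ N

theorem tendsto_normBound (hγ1 : 2 * γ < 1) :
    Tendsto M.normBound atTop (nhds (β / (1 - 2 * γ))) := by
  have hpow : Tendsto (fun N : ℕ => (N : ℝ) ^ (2 * γ - 1)) atTop (nhds 0) := by
    simpa [Function.comp_def] using
      (tendsto_rpow_neg_atTop (by linarith : 0 < 1 - 2 * γ)).comp tendsto_natCast_atTop_atTop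
  have := ((hpow.const_mul β).const_add (β / (1 - 2 * γ))).add M.q_approx.sqrt
  rwa [mul_zero, add_zero, Real.sqrt_zero, add_zero] at this

end IRGModel

/-- **Proposition (diameter).** For `G_N ∈ 𝒢_{β,γ}` with `β + 2γ < 1`, the maximal
component diameter is `O_P(log N)`: there is a constant `C` such that with probability
tending to 1 every component has diameter at most `C log N`. -/
theorem component_diameter_log (β γ : ℝ) (hβ : 0 < β) (hγ : 0 < γ)
    (hsub : β + 2 * γ < 1) (M : IRGModel β γ) :
    ∃ C : ℝ, 0 < C ∧ Tendsto (fun N => M.law N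
      {ω | ∀ i j : Fin N, (graphOf ω).Reachable i j →
        ((graphOf ω).dist i j : ℝ) ≤ C * Real.log N}) atTop (nhds 1) := by
  set ρ := β / (1 - 2 * γ)
  have hρ : 0 < ρ := div_pos hβ (by linarith)
  obtain ⟨r, hρr, hr1⟩ := exists_between ((div_lt_one (by linarith)).2 (by linarith) : ρ < 1)
  have hr0 : 0 < r := hρ.trans hρr
  refine ⟨-2 / Real.log r, div_pos_of_neg_of_neg (by norm_num) (Real.log_neg hr0 hr1), ?_⟩
  have hK := (M.tendsto_normBound (by linarith)).eventually_lt_const hρr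
  have hinv : Tendsto (fun N : ℕ => ENNReal.ofReal (N : ℝ)⁻¹) atTop (nhds 0) := by
    simpa using ENNReal.tendsto_ofReal (tendsto_inv_atTop_zero.comp tendsto_natCast_atTop_atTop)
  refine tendsto_measure_of_measure_compl_le M.law_prob
    (fun N => (Set.to_countable _).measurableSet) hinv ?_
  filter_upwards [hK, eventually_gt_atTop 0] with N hKN hN
  set L := ⌈-2 / Real.log r * Real.log N⌉₊
  calc M.law N {ω | ∀ i j : Fin N, (graphOf ω).Reachable i j →
        ((graphOf ω).dist i j : ℝ) ≤ -2 / Real.log r * Real.log N}ᶜ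
      ≤ M.law N {ω | ∃ i j, (graphOf ω).Reachable i j ∧ L ≤ (graphOf ω).dist i j} := by
        refine measure_mono fun ω hω => ?_
        simp only [Set.mem_compl_iff, Set.mem_ofPred_eq, not_forall, not_le] at hω
        obtain ⟨i, j, hij, hlt⟩ := hω
        exact ⟨i, j, hij, Nat.ceil_le.2 hlt.le⟩
    _ ≤ ENNReal.ofReal (N * r ^ L) := (M.law_exists_le_dist_le N L).trans
        (ENNReal.ofReal_le_ofReal (M.sum_prod_qOff_le hβ hγ.le (by linarith) hN hKN.le L))
    _ ≤ ENNReal.ofReal (N : ℝ)⁻¹ :=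
        ENNReal.ofReal_le_ofReal (natCast_mul_pow_ceil_le_inv hr0 hr1 N)

end VoterIRG
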